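/- arXiv:1404.3149 — 3 statements merged into one kernel-verified Lean document; each statement's English description precedes it below -/
import Mathlib

section
/- Let n ≥ 1 and let g : ℂ^{n+1} → ℂ^{n+1} be the fold map g(x_1, …, x_n, x_{n+1}) = (x_1, …, x_n, x_{n+1}²). A map η : ℂ^{n+1} → ℂ^{n+1}, analytic on a neighbourhood of 0, is liftable over g if and only if its last component vanishes identically on the hyperplane {X_{n+1} = 0} near 0, i.e. η_{n+1}(X_1, …, X_n, 0) = 0 for all (X_1,…,X_n) in a neighbourhood of 0 in ℂ^n. -/
/-!
The differential of the fold `g` at `x` is `v ↦ (v₁, …, vₙ, 2 xₙ₊₁ vₙ₊₁)` and `g` fixes the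
hyperplane `H = {Xₙ₊₁ = 0}`, so on `H` the last component of `dg(ξ) = η ∘ g` reads `0 = ηₙ₊₁`.

Conversely, if `ηₙ₊₁` vanishes on `H`, Hadamard's lemma writes `ηₙ₊₁ = Xₙ₊₁ · a` with `a`
analytic. To get `a`, telescope each homogeneous term `pₘ(x, …, x) - pₘ(Px, …, Px)` of the power
series of `ηₙ₊₁`, where `Px = x - xₙ₊₁ eₙ₊₁` is the projection onto `H`: every difference carries
the factor `xₙ₊₁`, and the quotients form a power series of positive radius. Then
`ξ(x) = (η₁(g x), …, ηₙ(g x), xₙ₊₁ · a(g x) / 2)` is an analytic lift, since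
`ηₙ₊₁(g x) = xₙ₊₁² · a(g x)`.
-/

open Filter Topology

def Liftable {E F : Type*} [NormedAddCommGroup E] [NormedSpace ℂ E]
    [NormedAddCommGroup F] [NormedSpace ℂ F] (f : E → F) (η : F → F) : Prop :=
  ∃ ξ : E → E, (∀ᶠ x in 𝓝 0, AnalyticAt ℂ ξ x) ∧
    ∀ᶠ x in 𝓝 0, fderiv ℂ f x (ξ x) = η (f x)

variable {𝕜 E F : Type*} [NontriviallyNormedField 𝕜] [NormedAddCommGroup E] [NormedSpace 𝕜 E]
  [NormedAddCommGroup F] [NormedSpace 𝕜 F]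

/-- The projection onto `ker ℓ` along `e` when `ℓ e = 1`. -/
def hyperplaneProj (ℓ : E →L[𝕜] 𝕜) (e : E) : E →L[𝕜] E :=
  .id 𝕜 E - ℓ.smulRight e

@[simp]
theorem hyperplaneProj_apply (ℓ : E →L[𝕜] 𝕜) (e x : E) : hyperplaneProj ℓ e x = x - ℓ x • e :=
  rfl

namespace FormalMultilinearSeries

theorem radius_pos_of_norm_le_mul_pow (q : FormalMultilinearSeries 𝕜 E F) {C R : ℝ}
    (hR : 0 < R) (h : ∀ n, ‖q n‖ ≤ C * R ^ n) : 0 < q.radius := by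
  have hbound : ∀ n, ‖q n‖ * ((R.toNNReal⁻¹ : NNReal) : ℝ) ^ n ≤ C := fun n => by
    rw [NNReal.coe_inv, Real.coe_toNNReal _ hR.le]
    calc ‖q n‖ * R⁻¹ ^ n ≤ C * R ^ n * R⁻¹ ^ n := by gcongr; exact h n
      _ = C := by rw [mul_assoc, ← mul_pow, mul_inv_cancel₀ hR.ne', one_pow, mul_one]
  refine lt_of_lt_of_le ?_ (q.le_radius_of_bound C hbound)
  simpa using hR

variable (p : FormalMultilinearSeries 𝕜 E F) (ℓ : E →L[𝕜] 𝕜) (e : E)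

/-- On the diagonal, the `i`-th summand has `e` in slot `i`, `x` before it and
`hyperplaneProj ℓ e x` after it; multiplied by `ℓ x`, the sum telescopes. -/
noncomputable def hadamardSeries : FormalMultilinearSeries 𝕜 E F := fun m =>
  ∑ i : Fin (m + 1), ((p (m + 1)).curryMid i e).compContinuousLinearMap fun k =>
    if i.succAbove k < i then .id 𝕜 E else hyperplaneProj ℓ e

theorem norm_hadamardSeries_le (m : ℕ) :
    ‖p.hadamardSeries ℓ e m‖ ≤
      ‖e‖ * ‖p (m + 1)‖ * ((m + 1) * max 1 ‖hyperplaneProj ℓ e‖ ^ m) := by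
  set K := max 1 ‖hyperplaneProj ℓ e‖
  have hslot : ∀ (i : Fin (m + 1)) (k : Fin m),
      ‖if i.succAbove k < i then .id 𝕜 E else hyperplaneProj ℓ e‖ ≤ K := fun i k => by
    split_ifs
    · exact ContinuousLinearMap.norm_id_le.trans (le_max_left _ _)
    · exact le_max_right _ _
  refine (norm_sum_le _ _).trans ?_
  calc _ ≤ ∑ _i : Fin (m + 1), ‖e‖ * ‖p (m + 1)‖ * K ^ m := by
        gcongr with i
        refine (ContinuousMultilinearMap.norm_compContinuousLinearMap_le _ _).trans ?_
        gcongr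
        · calc _ ≤ ‖(p (m + 1)).curryMid i‖ * ‖e‖ := ContinuousLinearMap.le_opNorm _ _
            _ = _ := by rw [ContinuousMultilinearMap.norm_curryMid, mul_comm]
        · exact (Finset.prod_le_prod (fun _ _ => norm_nonneg _) fun k _ => hslot i k).trans
            (by simp)
    _ = _ := by
        rw [Finset.sum_const, Finset.card_univ, Fintype.card_fin, nsmul_eq_mul]
        push_cast
        ring

theorem hadamardSeries_radius_pos (hp : 0 < p.radius) : 0 < (p.hadamardSeries ℓ e).radius := by
  obtain ⟨C, r, hC, hr, hCr⟩ := p.le_mul_pow_of_radius_pos hp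
  set K := max 1 ‖hyperplaneProj ℓ e‖
  have hK : 0 < K := lt_max_of_lt_left one_pos
  refine (p.hadamardSeries ℓ e).radius_pos_of_norm_le_mul_pow (C := ‖e‖ * C * r)
    (by positivity : 0 < 2 * K * r) fun m => (p.norm_hadamardSeries_le ℓ e m).trans ?_
  have hm : (m : ℝ) + 1 ≤ 2 ^ m := by exact_mod_cast Nat.lt_two_pow_self
  calc ‖e‖ * ‖p (m + 1)‖ * ((m + 1) * K ^ m) ≤ ‖e‖ * (C * r ^ (m + 1)) * (2 ^ m * K ^ m) := by
        gcongr; exact hCr _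
    _ = _ := by ring

theorem smul_hadamardSeries_apply_diag (m : ℕ) (x : E) :
    ℓ x • p.hadamardSeries ℓ e m (fun _ => x) =
      p (m + 1) (fun _ => x) - p (m + 1) (fun _ => hyperplaneProj ℓ e x) := by
  have htele := (p (m + 1)).toMultilinearMap.map_sub_map_piecewise (fun _ => x)
    (fun _ => hyperplaneProj ℓ e x) Finset.univ
  rw [Finset.piecewise_univ] at htele
  simp only [ContinuousMultilinearMap.coe_coe] at htele
  rw [htele, hadamardSeries, sum_apply, Finset.smul_sum]
  refine Finset.sum_congr rfl fun i _ => ?_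
  rw [ContinuousMultilinearMap.compContinuousLinearMap_apply, ← _root_.smul_apply,
    ← map_smul, ContinuousMultilinearMap.curryMid_apply]
  congr 1
  ext j
  refine Fin.succAboveCases i ?_ (fun k => ?_) j
  · simp
  · have hne : i ≠ i.succAbove k := (Fin.succAbove_ne i k).symm
    by_cases hk : i.succAbove k < i <;> simp [hk, hne]

end FormalMultilinearSeries

theorem AnalyticAt.exists_sub_comp_hyperplaneProj_eq_smul [CompleteSpace F] {f : E → F}
    (hf : AnalyticAt 𝕜 f 0) (ℓ : E →L[𝕜] 𝕜) (e : E) :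
    ∃ a : E → F, (∀ᶠ x in 𝓝 0, AnalyticAt 𝕜 a x) ∧
      ∀ᶠ x in 𝓝 0, f x - f (hyperplaneProj ℓ e x) = ℓ x • a x := by
  obtain ⟨p, r, hp⟩ := hf
  have hq := (p.hadamardSeries ℓ e).hasFPowerSeriesOnBall
    (p.hadamardSeries_radius_pos ℓ e (hp.r_pos.trans_le hp.r_le))
  have hP : Tendsto (hyperplaneProj ℓ e) (𝓝 0) (𝓝 0) := by
    simpa using (hyperplaneProj ℓ e).continuous.tendsto 0
  refine ⟨(p.hadamardSeries ℓ e).sum, hq.analyticAt.eventually_analyticAt, ?_⟩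
  filter_upwards [hp.eventually_hasSum, hP.eventually hp.eventually_hasSum, hq.eventually_hasSum]
    with x hfx hfPx hqx
  simp only [zero_add] at hfx hfPx hqx
  have hshift : HasSum
      (fun m => p (m + 1) (fun _ => x) - p (m + 1) (fun _ => hyperplaneProj ℓ e x))
      (ℓ x • (p.hadamardSeries ℓ e).sum x) := by
    simpa only [p.smul_hadamardSeries_apply_diag] using hqx.const_smul (ℓ x)
  have hsub : HasSum (fun m => p m (fun _ => x) - p m (fun _ => hyperplaneProj ℓ e x))
      (ℓ x • (p.hadamardSeries ℓ e).sum x) := by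
    rw [← hasSum_nat_add_iff' 1]
    simpa [Subsingleton.elim (fun _ : Fin 0 => x) (fun _ => hyperplaneProj ℓ e x)] using hshift
  exact (hfx.sub hfPx).unique hsub

theorem AnalyticAt.exists_eq_smul_of_vanishing_on_ker [CompleteSpace F] {f : E → F}
    (hf : AnalyticAt 𝕜 f 0) {ℓ : E →L[𝕜] 𝕜} {e : E} (hℓe : ℓ e = 1)
    (hker : ∀ᶠ x in 𝓝 0, ℓ x = 0 → f x = 0) :
    ∃ a : E → F, (∀ᶠ x in 𝓝 0, AnalyticAt 𝕜 a x) ∧ ∀ᶠ x in 𝓝 0, f x = ℓ x • a x := by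
  obtain ⟨a, ha, hfa⟩ := hf.exists_sub_comp_hyperplaneProj_eq_smul ℓ e
  have hP : Tendsto (hyperplaneProj ℓ e) (𝓝 0) (𝓝 0) := by
    simpa using (hyperplaneProj ℓ e).continuous.tendsto 0
  refine ⟨a, ha, ?_⟩
  filter_upwards [hfa, hP.eventually hker] with x hx hPx
  rwa [hPx (by simp [hℓe]), sub_zero] at hx

theorem AnalyticAt.update {ι : Type*} [Fintype ι] [DecidableEq ι] {f : E → ι → 𝕜} {c : E → 𝕜}
    {x : E} (hf : AnalyticAt 𝕜 f x) (hc : AnalyticAt 𝕜 c x) (i : ι) :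
    AnalyticAt 𝕜 (fun y => Function.update (f y) i (c y)) x := by
  refine AnalyticAt.pi fun j => ?_
  rcases eq_or_ne j i with rfl | hj
  · simpa using hc
  · simp only [Function.update_of_ne hj]
    exact ((ContinuousLinearMap.proj j : (ι → 𝕜) →L[𝕜] 𝕜).analyticAt _).comp hf

section Fold

variable {ι : Type*} [DecidableEq ι]

def fold (i : ι) (x : ι → 𝕜) : ι → 𝕜 := Function.update x i (x i ^ 2)

theorem fold_of_apply_eq_zero {i : ι} {x : ι → 𝕜} (hx : x i = 0) : fold i x = x := by
  simp [fold, hx]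

@[simp]
theorem fold_apply_self (i : ι) (x : ι → 𝕜) : fold i x i = x i ^ 2 := by
  simp [fold]

variable [Fintype ι]

theorem analyticAt_fold (i : ι) (x : ι → 𝕜) : AnalyticAt 𝕜 (fold i) x :=
  analyticAt_id.update (((ContinuousLinearMap.proj i : (ι → 𝕜) →L[𝕜] 𝕜).analyticAt x).pow 2) i

theorem fderiv_fold_apply (i : ι) (x v : ι → 𝕜) :
    fderiv 𝕜 (fold i) x v = Function.update v i (2 * x i * v i) := by
  have hD : HasFDerivAt (fold i) (ContinuousLinearMap.pi fun j =>
      if j = i then (2 * x i) • (ContinuousLinearMap.proj i : (ι → 𝕜) →L[𝕜] 𝕜)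
      else ContinuousLinearMap.proj j) x := by
    refine hasFDerivAt_pi.2 fun j => ?_
    rcases eq_or_ne j i with rfl | hj
    · simp only [fold_apply_self]
      refine ((hasFDerivAt_apply j x).pow 2).congr_fderiv ?_
      simp
    · simpa [fold, hj] using hasFDerivAt_apply (𝕜 := 𝕜) j x
  rw [hD.fderiv]
  ext j
  rcases eq_or_ne j i with rfl | hj
  · simp
  · simp [hj]

theorem liftable_fold_of_eq_mul (i : ι) {η : (ι → ℂ) → ι → ℂ} {a : (ι → ℂ) → ℂ}
    (hη : ∀ᶠ y in 𝓝 0, AnalyticAt ℂ η y) (ha : ∀ᶠ y in 𝓝 0, AnalyticAt ℂ a y)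
    (hηa : ∀ᶠ y in 𝓝 0, η y i = y i * a y) : Liftable (fold i) η := by
  have hfold : Tendsto (fold i) (𝓝 (0 : ι → ℂ)) (𝓝 0) := by
    simpa [fold] using (analyticAt_fold i (0 : ι → ℂ)).continuousAt.tendsto
  refine ⟨fun x => Function.update (η (fold i x)) i (x i * a (fold i x) / 2), ?_, ?_⟩
  · filter_upwards [hfold.eventually hη, hfold.eventually ha] with x hηx hax
    have hxi := (ContinuousLinearMap.proj i : (ι → ℂ) →L[ℂ] ℂ).analyticAt x
    exact (hηx.comp (analyticAt_fold i x)).update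
      ((hxi.mul (hax.comp (analyticAt_fold i x))).div_const (c := 2)) i
  · filter_upwards [hfold.eventually hηa] with x hx
    rw [fold_apply_self] at hx
    rw [fderiv_fold_apply]
    ext j
    rcases eq_or_ne j i with rfl | hj
    · simp only [Function.update_self, hx]
      ring
    · simp [hj]

end Fold

theorem liftable_over_fold_iff_general
    (n : ℕ)
    (g : (Fin (n + 1) → ℂ) → (Fin (n + 1) → ℂ))
    (hg : ∀ x, g x = Function.update x (Fin.last n) ((x (Fin.last n)) ^ 2))
    (η : (Fin (n + 1) → ℂ) → (Fin (n + 1) → ℂ))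
    (hη : ∀ᶠ X in 𝓝 0, AnalyticAt ℂ η X) :
    Liftable g η ↔
      ∃ U ∈ 𝓝 (0 : Fin (n + 1) → ℂ), ∀ X ∈ U,
        X (Fin.last n) = 0 → η X (Fin.last n) = 0 := by
  obtain rfl : g = fold (Fin.last n) := funext hg
  constructor
  · rintro ⟨ξ, -, hξ⟩
    refine ⟨_, hξ, fun X hX hX0 => ?_⟩
    have hlast := congrFun hX (Fin.last n)
    rw [fold_of_apply_eq_zero hX0, fderiv_fold_apply] at hlast
    simpa [hX0] using hlast.symm
  · rintro ⟨U, hU, hvan⟩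
    let ℓ : (Fin (n + 1) → ℂ) →L[ℂ] ℂ := ContinuousLinearMap.proj (Fin.last n)
    have hηℓ : AnalyticAt ℂ (fun X => η X (Fin.last n)) 0 :=
      (ℓ.analyticAt _).comp hη.self_of_nhds
    obtain ⟨a, ha, hηa⟩ := hηℓ.exists_eq_smul_of_vanishing_on_ker (ℓ := ℓ)
      (e := Pi.single (Fin.last n) 1) (by simp [ℓ]) (eventually_of_mem hU hvan)
    exact liftable_fold_of_eq_mul _ hη ha hηa

/-- A map `η`, analytic near `0`, is liftable over the fold map
`g(x₁,…,xₙ,x_{n+1}) = (x₁,…,xₙ,x_{n+1}²)` iff its last component vanishes identically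
on the hyperplane `{X_{n+1} = 0}` near `0`. -/
theorem liftable_over_fold_iff
    (n : ℕ) (hn : 1 ≤ n)
    (g : (Fin (n + 1) → ℂ) → (Fin (n + 1) → ℂ))
    (hg : ∀ x, g x = Function.update x (Fin.last n) ((x (Fin.last n)) ^ 2))
    (η : (Fin (n + 1) → ℂ) → (Fin (n + 1) → ℂ))
    (hη : ∀ᶠ X in 𝓝 0, AnalyticAt ℂ η X) :
    Liftable g η ↔
      ∃ U ∈ 𝓝 (0 : Fin (n + 1) → ℂ), ∀ X ∈ U,
        X (Fin.last n) = 0 → η X (Fin.last n) = 0 :=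
  liftable_over_fold_iff_general n g hg η hη
end

section
/- Let l ≥ 1 and let f : ℂ² → ℂ² be the map f(x, z) = (x³ + z^l x, z). Then both of the polynomial vector fields η_1(X, Z) = (3lX, 2Z) and η_2(X, Z) = (−2lZ^{3l−1}, 9X) are liftable over f; explicitly, ξ_1(x, z) = (lx, 2z) satisfies (fderiv ℂ f (x,z))(ξ_1(x,z)) = η_1(f(x,z)) and ξ_2(x, z) = (−3l x² z^{l−1} − 2l z^{2l−1}, 9x³ + 9z^l x) satisfies (fderiv ℂ f (x,z))(ξ_2(x,z)) = η_2(f(x,z)), for all (x,z) ∈ ℂ². -/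
open Filter Topology

theorem Liftable.of_forall {E F : Type*} [NormedAddCommGroup E] [NormedSpace ℂ E]
    [NormedAddCommGroup F] [NormedSpace ℂ F] {f : E → F} {η : F → F} (ξ : E → E)
    (hξ : ∀ x, AnalyticAt ℂ ξ x) (hlift : ∀ x, fderiv ℂ f x (ξ x) = η (f x)) :
    Liftable f η :=
  ⟨ξ, .of_forall hξ, .of_forall hlift⟩

-- For `n = 0` the truncated exponent `n - 1 = 0` is harmless because of the factor `n`.
lemma natCast_mul_pow_sub_one_mul {R : Type*} [CommSemiring R] (n : ℕ) (a : R) :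
    (n : R) * a ^ (n - 1) * a = n * a ^ n := by
  rcases n with _ | n
  · simp
  · rw [Nat.add_sub_cancel, mul_assoc, ← pow_succ]

def augmentedCusp (l : ℕ) (p : ℂ × ℂ) : ℂ × ℂ :=
  (p.1 ^ 3 + p.2 ^ l * p.1, p.2)

lemma fderiv_augmentedCusp_apply (l : ℕ) (x z : ℂ) (v : ℂ × ℂ) :
    fderiv ℂ (augmentedCusp l) (x, z) v =
      ((3 * x ^ 2 + z ^ l) * v.1 + l * z ^ (l - 1) * x * v.2, v.2) := by
  unfold augmentedCusp
  rw [DifferentiableAt.fderiv_prodMk (by fun_prop) (by fun_prop),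
    fderiv_fun_add (by fun_prop) (by fun_prop), fderiv_fun_mul (by fun_prop) (by fun_prop),
    fderiv_fun_pow _ (by fun_prop), fderiv_fun_pow _ (by fun_prop)]
  simp only [Nat.add_one_sub_one, nsmul_eq_mul, Nat.cast_ofNat, fderiv_fst, fderiv_snd,
    ContinuousLinearMap.prod_apply, add_apply, smul_apply,
    ContinuousLinearMap.coe_fst', ContinuousLinearMap.coe_snd', smul_eq_mul, Prod.mk.injEq,
    and_true]
  ring

attribute [local fun_prop] analyticAt_fst analyticAt_snd

theorem lift_of_augmented_cusp_general
    (l : ℕ)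
    (f : ℂ × ℂ → ℂ × ℂ) (hf : ∀ x z : ℂ, f (x, z) = (x ^ 3 + z ^ l * x, z))
    (η₁ η₂ : ℂ × ℂ → ℂ × ℂ)
    (hη₁ : ∀ X Z : ℂ, η₁ (X, Z) = (3 * (l : ℂ) * X, 2 * Z))
    (hη₂ : ∀ X Z : ℂ, η₂ (X, Z) = (-2 * (l : ℂ) * Z ^ (3 * l - 1), 9 * X)) :
    (∀ x z : ℂ, fderiv ℂ f (x, z) ((l : ℂ) * x, 2 * z) = η₁ (f (x, z))) ∧
    (∀ x z : ℂ, fderiv ℂ f (x, z)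
      (-3 * (l : ℂ) * x ^ 2 * z ^ (l - 1) - 2 * (l : ℂ) * z ^ (2 * l - 1),
        9 * x ^ 3 + 9 * z ^ l * x) = η₂ (f (x, z))) ∧
    Liftable f η₁ ∧ Liftable f η₂ := by
  obtain rfl : f = augmentedCusp l := funext fun p => hf p.1 p.2
  have lift₁ (x z : ℂ) :
      fderiv ℂ (augmentedCusp l) (x, z) ((l : ℂ) * x, 2 * z) = η₁ (augmentedCusp l (x, z)) := by
    rw [fderiv_augmentedCusp_apply, augmentedCusp, hη₁, Prod.mk.injEq]
    refine ⟨?_, rfl⟩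
    linear_combination 2 * x * natCast_mul_pow_sub_one_mul l z
  have lift₂ (x z : ℂ) :
      fderiv ℂ (augmentedCusp l) (x, z)
        (-3 * (l : ℂ) * x ^ 2 * z ^ (l - 1) - 2 * (l : ℂ) * z ^ (2 * l - 1),
          9 * x ^ 3 + 9 * z ^ l * x) = η₂ (augmentedCusp l (x, z)) := by
    rw [fderiv_augmentedCusp_apply, augmentedCusp, hη₂, Prod.mk.injEq]
    refine ⟨?_, by ring⟩
    have h₂ : z ^ (l - 1) * z ^ l = z ^ (2 * l - 1) := by rw [← pow_add]; congr 1; omega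
    have h₃ : z ^ l * z ^ (2 * l - 1) = z ^ (3 * l - 1) := by rw [← pow_add]; congr 1; omega
    linear_combination 6 * (l : ℂ) * x ^ 2 * h₂ - 2 * (l : ℂ) * h₃
  exact ⟨lift₁, lift₂, .of_forall _ (fun _ => by fun_prop) fun p => lift₁ p.1 p.2,
    .of_forall _ (fun _ => by fun_prop) fun p => lift₂ p.1 p.2⟩

/-- Example 4.5 i): for the augmentation `f(x,z) = (x³ + zˡx, z)`, the vector fields
`η₁(X,Z) = (3lX, 2Z)` and `η₂(X,Z) = (−2lZ^{3l−1}, 9X)` are liftable over `f`, with the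
explicit lifts `ξ₁(x,z) = (lx, 2z)` and
`ξ₂(x,z) = (−3lx²z^{l−1} − 2lz^{2l−1}, 9x³ + 9zˡx)`. -/
theorem lift_of_augmented_cusp
    (l : ℕ) (hl : 1 ≤ l)
    (f : ℂ × ℂ → ℂ × ℂ) (hf : ∀ x z : ℂ, f (x, z) = (x ^ 3 + z ^ l * x, z))
    (η₁ η₂ : ℂ × ℂ → ℂ × ℂ)
    (hη₁ : ∀ X Z : ℂ, η₁ (X, Z) = (3 * (l : ℂ) * X, 2 * Z))
    (hη₂ : ∀ X Z : ℂ, η₂ (X, Z) = (-2 * (l : ℂ) * Z ^ (3 * l - 1), 9 * X)) :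
    (∀ x z : ℂ, fderiv ℂ f (x, z) ((l : ℂ) * x, 2 * z) = η₁ (f (x, z))) ∧
    (∀ x z : ℂ, fderiv ℂ f (x, z)
      (-3 * (l : ℂ) * x ^ 2 * z ^ (l - 1) - 2 * (l : ℂ) * z ^ (2 * l - 1),
        9 * x ^ 3 + 9 * z ^ l * x) = η₂ (f (x, z))) ∧
    Liftable f η₁ ∧ Liftable f η₂ :=
  lift_of_augmented_cusp_general l f hf η₁ η₂ hη₁ hη₂
end

section
/- Let l, m ≥ 1 and let F : ℂ³ → ℂ³ be the map F(x, y, z) = (x³ + y^l x + z^m x, y, z). The critical set of F is Σ = {(x, y, z) ∈ ℂ³ : 3x² + y^l + z^m = 0} (the vanishing locus of the Jacobian determinant of F), and the discriminant of F, i.e. the image F(Σ), is exactly the set {(X, Y, Z) ∈ ℂ³ : 27X² + 4(Y^l + Z^m)³ = 0}. -/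
/-!
`F` unfolds the cusp `x ↦ x³ + a x` along the parameters `v = (y, z)`, with `a = yˡ + zᵐ`.
Its differential is triangular with the identity on the parameter block, so it is invertible
exactly when `∂F₁/∂x = 3x² + a` is nonzero. On the critical set, eliminating `x` from
`X = x³ + a x` and `3x² + a = 0` gives `27X² + 4a³ = 0`; conversely, if `t² = -a/3` then the
critical points `±t` take the values `∓2t³`, which are the two roots `X` of `27X² + 4a³`.
-/

open Function

def cuspAugmentation {R E : Type*} [CommRing R] (a : E → R) (p : R × E) : R × E :=
  (p.1 ^ 3 + a p.2 * p.1, p.2)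

theorem bijective_prod_shear_iff {K E : Type*} [Field K] [Nonempty E] (c : K) (g : E → K) :
    Bijective (fun p : K × E => (c * p.1 + g p.2, p.2)) ↔ c ≠ 0 := by
  refine ⟨fun hbij hc => ?_, fun hc => ?_⟩
  · obtain ⟨v⟩ := ‹Nonempty E›
    have := hbij.injective (a₁ := (1, v)) (a₂ := (0, v)) (by simp [hc])
    simp at this
  · refine bijective_iff_has_inverse.mpr ⟨fun q => (c⁻¹ * (q.1 - g q.2), q.2), ?_, ?_⟩
    · rintro ⟨u, v⟩
      simp [hc]
    · rintro ⟨u, v⟩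
      simp [hc]

section Derivative

variable {𝕜 E : Type*} [NontriviallyNormedField 𝕜] [NormedAddCommGroup E] [NormedSpace 𝕜 E]
  {a : E → 𝕜} {a' : E →L[𝕜] 𝕜} {p : 𝕜 × E}

theorem hasFDerivAt_cuspAugmentation (ha : HasFDerivAt a a' p.2) :
    HasFDerivAt (cuspAugmentation a)
      (((3 * p.1 ^ 2 + a p.2) • ContinuousLinearMap.fst 𝕜 𝕜 E +
          p.1 • a'.comp (ContinuousLinearMap.snd 𝕜 𝕜 E)).prod
        (ContinuousLinearMap.snd 𝕜 𝕜 E)) p := by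
  have hfst := hasFDerivAt_fst (𝕜 := 𝕜) (p := p)
  have hcube := (hasDerivAt_pow 3 p.1).comp_hasFDerivAt p hfst
  have hprod := (ha.comp p hasFDerivAt_snd).mul hfst
  refine ((hcube.add hprod).prodMk hasFDerivAt_snd).congr_fderiv ?_
  ext <;> simp

theorem bijective_fderiv_cuspAugmentation_iff (ha : DifferentiableAt 𝕜 a p.2) :
    Bijective (fderiv 𝕜 (cuspAugmentation a) p) ↔ 3 * p.1 ^ 2 + a p.2 ≠ 0 := by
  rw [← bijective_prod_shear_iff _ fun v => p.1 * fderiv 𝕜 a p.2 v,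
    (hasFDerivAt_cuspAugmentation ha.hasFDerivAt).fderiv]
  rfl

end Derivative

theorem exists_cusp_critical_point_iff {K : Type*} [Field K] [IsAlgClosed K] (h3 : (3 : K) ≠ 0)
    (c X : K) : (∃ x, 3 * x ^ 2 + c = 0 ∧ x ^ 3 + c * x = X) ↔ 27 * X ^ 2 + 4 * c ^ 3 = 0 := by
  constructor
  · rintro ⟨x, hx, rfl⟩
    linear_combination (3 * x ^ 2 + c) * (4 * (3 * x ^ 2 + c) - 9 * x ^ 2) * hx
  · intro h
    obtain ⟨t, ht⟩ := IsAlgClosed.exists_pow_nat_eq (-c / 3) two_pos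
    have hs : 3 * t ^ 2 + c = 0 := by
      rw [ht, mul_div_cancel₀ _ h3, neg_add_cancel]
    have h27 : (27 : K) ≠ 0 := by simpa [show (27 : K) = 3 ^ 3 by norm_num] using h3
    have hX : 27 * ((X - 2 * t ^ 3) * (X + 2 * t ^ 3)) = 0 := by
      linear_combination h - 4 * (c ^ 2 - 3 * c * t ^ 2 + 9 * t ^ 4) * hs
    rcases mul_eq_zero.mp ((mul_eq_zero.mp hX).resolve_left h27) with hX | hX
    · exact ⟨-t, by linear_combination hs, by linear_combination -hX - t * hs⟩
    · exact ⟨t, by linear_combination hs, by linear_combination -hX + t * hs⟩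

theorem image_cuspAugmentation {K E : Type*} [Field K] [IsAlgClosed K] (h3 : (3 : K) ≠ 0)
    (a : E → K) :
    cuspAugmentation a '' {p | 3 * p.1 ^ 2 + a p.2 = 0} = {q | 27 * q.1 ^ 2 + 4 * a q.2 ^ 3 = 0} := by
  ext ⟨X, v⟩
  simp only [Set.mem_image, Set.mem_ofPred_eq, ← exists_cusp_critical_point_iff h3, Prod.exists,
    cuspAugmentation, Prod.mk.injEq]
  constructor
  · rintro ⟨x, _, hx, hX, rfl⟩
    exact ⟨x, hx, hX⟩
  · rintro ⟨x, hx, hX⟩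
    exact ⟨x, v, hx, hX, rfl⟩

theorem discriminant_of_augmentation_general
    (l m : ℕ)
    (F : ℂ × ℂ × ℂ → ℂ × ℂ × ℂ)
    (hF : ∀ x y z : ℂ, F (x, y, z) = (x ^ 3 + y ^ l * x + z ^ m * x, y, z)) :
    {p : ℂ × ℂ × ℂ | ¬ Function.Bijective ⇑(fderiv ℂ F p)} =
      {p : ℂ × ℂ × ℂ | 3 * p.1 ^ 2 + p.2.1 ^ l + p.2.2 ^ m = 0} ∧
    F '' {p : ℂ × ℂ × ℂ | 3 * p.1 ^ 2 + p.2.1 ^ l + p.2.2 ^ m = 0} =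
      {q : ℂ × ℂ × ℂ | 27 * q.1 ^ 2 + 4 * (q.2.1 ^ l + q.2.2 ^ m) ^ 3 = 0} := by
  obtain rfl : F = cuspAugmentation fun v : ℂ × ℂ => v.1 ^ l + v.2 ^ m := by
    funext ⟨x, y, z⟩
    rw [hF, cuspAugmentation]
    congr 1
    ring
  simp only [add_assoc]
  refine ⟨?_, image_cuspAugmentation three_ne_zero _⟩
  ext p
  rw [Set.mem_ofPred_eq, bijective_fderiv_cuspAugmentation_iff (by fun_prop), not_not]
  rfl

/-- Example 4.5 ii): for `F(x,y,z) = (x³ + yˡx + zᵐx, y, z)`, the critical set of `F` is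
`{3x² + yˡ + zᵐ = 0}` and the discriminant of `F` (the image of the critical set) is
exactly `{27X² + 4(Yˡ + Zᵐ)³ = 0}`. -/
theorem discriminant_of_augmentation
    (l m : ℕ) (hl : 1 ≤ l) (hm : 1 ≤ m)
    (F : ℂ × ℂ × ℂ → ℂ × ℂ × ℂ)
    (hF : ∀ x y z : ℂ, F (x, y, z) = (x ^ 3 + y ^ l * x + z ^ m * x, y, z)) :
    {p : ℂ × ℂ × ℂ | ¬ Function.Bijective ⇑(fderiv ℂ F p)} =
      {p : ℂ × ℂ × ℂ | 3 * p.1 ^ 2 + p.2.1 ^ l + p.2.2 ^ m = 0} ∧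
    F '' {p : ℂ × ℂ × ℂ | 3 * p.1 ^ 2 + p.2.1 ^ l + p.2.2 ^ m = 0} =
      {q : ℂ × ℂ × ℂ | 27 * q.1 ^ 2 + 4 * (q.2.1 ^ l + q.2.2 ^ m) ^ 3 = 0} :=
  discriminant_of_augmentation_general l m F hF
end
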